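/- arXiv:1812.00191 — 2 statements merged into one kernel-verified Lean document; each statement's English description precedes it below -/
import Mathlib

section
/- Let D > 0, k > 0, q > 0, R₀ > 0 and let b ∈ ℝ² with b ≠ 0. Under the uniform concentration assumption, the asymptotic channel response at a circular receiver of radius R₀ centered at b, due to continuous emission at rate q from a point transmitter at the origin, has the closed form π·R₀²·q·∫₀^∞ C(b, τ) dτ = (q·R₀²/(2D))·K₀(|b|·√(k/D)), where C(b, τ) = (1/(4πDτ))·exp(−|b|²/(4Dτ) − kτ). -/
open Real MeasureTheory

/-- The 2D reaction–diffusion heat kernel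
`C(r, τ) = (1/(4πDτ))·exp(−|r|²/(4Dτ) − kτ)` for `r ∈ ℝ²`. -/
noncomputable def heatKernel2D (D k : ℝ) (r : EuclideanSpace ℝ (Fin 2)) (τ : ℝ) : ℝ :=
  (1 / (4 * π * D * τ)) * Real.exp (-‖r‖ ^ 2 / (4 * D * τ) - k * τ)

/-- The modified Bessel function of the second kind of order 0,
`K₀(z) = ∫₀^∞ exp(−z·cosh t) dt`. -/
noncomputable def besselK0 (z : ℝ) : ℝ :=
  ∫ t in Set.Ioi (0 : ℝ), Real.exp (-z * Real.cosh t)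

/-!
With `A = |b|²/(4D)`, the substitution `τ = √(A/k)·eᵗ` turns `∫₀^∞ τ⁻¹ exp(−A/τ − kτ) dτ`
into `∫_ℝ exp(−2√(Ak)·cosh t) dt`, because `A/√(A/k) = k·√(A/k) = √(Ak)`. Since `cosh` is even,
this is `2·K₀(2√(Ak))`, and `2√(Ak) = |b|·√(k/D)`.
-/

open Set

theorem integral_Ioi_zero_eq_integral_comp_mul_exp {E : Type*} [NormedAddCommGroup E]
    [NormedSpace ℝ E] (g : ℝ → E) {α : ℝ} (hα : 0 < α) :
    ∫ x in Ioi 0, g x = ∫ t, (α * exp t) • g (α * exp t) := by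
  have himage : (fun t ↦ α * exp t) '' univ = Ioi 0 := by
    rw [image_univ, show (fun t ↦ α * exp t) = (α * ·) ∘ exp from rfl, range_comp,
      range_exp, image_const_mul_Ioi_zero hα]
  rw [← himage, integral_image_eq_integral_abs_deriv_smul MeasurableSet.univ
    (fun t _ ↦ ((hasDerivAt_exp t).const_mul α).hasDerivWithinAt)
    (fun t _ u _ h ↦ exp_injective (mul_left_cancel₀ hα.ne' h)), setIntegral_univ]
  simp_rw [abs_of_pos (mul_pos hα (exp_pos _))]

theorem integral_exp_neg_mul_cosh (z : ℝ) :
    ∫ t, exp (-z * cosh t) = 2 * besselK0 z := by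
  simpa only [cosh_abs, besselK0] using integral_comp_abs (f := fun t ↦ exp (-z * cosh t))

theorem integral_Ioi_inv_mul_exp_neg_div_sub_mul {A k : ℝ} (hA : 0 < A) (hk : 0 < k) :
    ∫ τ in Ioi 0, τ⁻¹ * exp (-A / τ - k * τ) = 2 * besselK0 (2 * √(A * k)) := by
  set α := √(A / k)
  have hα : 0 < α := sqrt_pos.2 (div_pos hA hk)
  have hk_mul : k * α = √(A * k) := by
    rw [show A * k = k ^ 2 * (A / k) by field_simp, sqrt_mul (sq_nonneg k), sqrt_sq hk.le]
  have hA_div : A / α = √(A * k) := by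
    rw [← hk_mul, div_eq_iff hα.ne', mul_assoc, ← sq, sq_sqrt (div_pos hA hk).le,
      mul_div_cancel₀ _ hk.ne']
  rw [integral_Ioi_zero_eq_integral_comp_mul_exp _ hα, ← integral_exp_neg_mul_cosh]
  congr 1 with t
  have hαt : α * exp t ≠ 0 := by positivity
  rw [smul_eq_mul, ← mul_assoc, mul_inv_cancel₀ hαt, one_mul, neg_div, ← div_div, hA_div,
    ← mul_assoc, hk_mul, cosh_eq, exp_neg]
  congr 1
  field_simp
  ring

theorem heatKernel2D_eq_mul_inv_mul_exp (D k : ℝ) (r : EuclideanSpace ℝ (Fin 2)) (τ : ℝ) :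
    heatKernel2D D k r τ = (4 * π * D)⁻¹ * (τ⁻¹ * exp (-(‖r‖ ^ 2 / (4 * D)) / τ - k * τ)) := by
  rw [heatKernel2D, one_div, mul_inv, mul_assoc, neg_div, neg_div, div_div]

theorem uca_asymptotic_channel_response_general (D k q R₀ : ℝ) (b : EuclideanSpace ℝ (Fin 2))
    (hD : 0 < D) (hk : 0 < k) (hb : b ≠ 0) :
    π * R₀ ^ 2 * q * ∫ τ in Set.Ioi (0 : ℝ), heatKernel2D D k b τ =
      (q * R₀ ^ 2 / (2 * D)) * besselK0 (‖b‖ * Real.sqrt (k / D)) := by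
  have hA : 0 < ‖b‖ ^ 2 / (4 * D) := by have := norm_pos_iff.2 hb; positivity
  have hz : 2 * √(‖b‖ ^ 2 / (4 * D) * k) = ‖b‖ * √(k / D) := by
    rw [show ‖b‖ ^ 2 / (4 * D) * k = (‖b‖ / 2) ^ 2 * (k / D) by ring,
      sqrt_mul (sq_nonneg _), sqrt_sq (by positivity)]
    ring
  simp_rw [heatKernel2D_eq_mul_inv_mul_exp]
  rw [integral_const_mul, integral_Ioi_inv_mul_exp_neg_div_sub_mul hA hk, hz]
  field_simp
  ring

/-- For `D > 0`, `k > 0`, `q > 0`, `R₀ > 0` and `b ∈ ℝ²` with `b ≠ 0`, the asymptotic channel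
response under the uniform concentration assumption has the closed form
`π·R₀²·q·∫₀^∞ C(b, τ) dτ = (q·R₀²/(2D))·K₀(|b|·√(k/D))`. -/
theorem uca_asymptotic_channel_response (D k q R₀ : ℝ) (b : EuclideanSpace ℝ (Fin 2))
    (hD : 0 < D) (hk : 0 < k) (hq : 0 < q) (hR₀ : 0 < R₀) (hb : b ≠ 0) :
    π * R₀ ^ 2 * q * ∫ τ in Set.Ioi (0 : ℝ), heatKernel2D D k b τ =
      (q * R₀ ^ 2 / (2 * D)) * besselK0 (‖b‖ * Real.sqrt (k / D)) :=
  uca_asymptotic_channel_response_general D k q R₀ b hD hk hb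
end

section
/- Let q > 0, k > 0, D > 0 and R₀ > 0, and for b ∈ ℝ² define N̄(b) = ∫₀^∞ ∫_{{y ∈ ℝ² : |y − b| ≤ R₀}} q·C(y, τ) dy dτ, the asymptotic channel response at a circular receiver of radius R₀ centered at b due to continuous emission at rate q from the origin. Then N̄(b) tends to (q/k)·(1 − √(k/D)·R₀·K₁(√(k/D)·R₀)) as b → 0 in ℝ², where K₁(z) = ∫₀^∞ exp(−z·cosh t)·cosh t dt. -/
/-!
On the disc of radius `R₀` centred at the source, the kernel at time `τ` has mass
`e^{-kτ} (1 - e^{-R₀²/(4Dτ)})` (a radial Gaussian integral). Integrating in time gives `1/k` minus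
`∫₀^∞ e^{-kτ - R₀²/(4Dτ)} dτ`, and the substitution `τ = c eᵗ`, `c = R₀ / (2√(kD))`, turns the
exponent into `-√(k/D) R₀ cosh t`, which yields the Bessel term. Continuity at `b = 0` is dominated
convergence twice: in space because spheres are null, in time with the bound `e^{-kτ}`, the total
mass of the kernel.
-/

open Real MeasureTheory Filter

/-- The modified Bessel function of the second kind of order 1,
`K₁(z) = ∫₀^∞ exp(−z·cosh t)·cosh t dt`. -/
noncomputable def besselK1 (z : ℝ) : ℝ :=
  ∫ t in Set.Ioi (0 : ℝ), Real.exp (-z * Real.cosh t) * Real.cosh t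

open Set Metric

local notation "ℝ²" => EuclideanSpace ℝ (Fin 2)

section ClosedBall

variable {E G : Type*} [NormedAddCommGroup E] [NormedSpace ℝ E] [MeasurableSpace E] [BorelSpace E]
  [FiniteDimensional ℝ E] [Nontrivial E] {μ : Measure E} [μ.IsAddHaarMeasure]
  [NormedAddCommGroup G] [NormedSpace ℝ G]

theorem continuous_setIntegral_closedBall {f : E → G} (hf : Integrable f μ) (R : ℝ) :
    Continuous fun b => ∫ y in closedBall b R, f y ∂μ := by
  simp_rw [continuous_iff_continuousAt, ← integral_indicator measurableSet_closedBall]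
  intro b₀
  refine continuousAt_of_dominated (bound := fun y => ‖f y‖)
    (.of_forall fun b => hf.aestronglyMeasurable.indicator measurableSet_closedBall)
    (.of_forall fun b => .of_forall fun y => norm_indicator_le_norm_self _ _) hf.norm ?_
  have hsphere : ∀ᵐ y ∂μ, y ∉ sphere b₀ R :=
    measure_eq_zero_iff_ae_notMem.1 (μ.addHaar_sphere b₀ R)
  filter_upwards [hsphere] with y hy
  have hswap :
      (fun b => (closedBall b R).indicator f y) = (closedBall y R).indicator fun _ => f y := by
    ext b
    simp only [indicator, mem_closedBall, dist_comm]
  rw [hswap]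
  refine continuousOn_const.continuousAt_indicator ?_
  rwa [frontier_closedBall', mem_sphere_comm]

end ClosedBall

theorem integral_exp_neg_mul_norm_sq {b : ℝ} (hb : 0 < b) :
    ∫ y : ℝ², exp (-b * ‖y‖ ^ 2) = π / b := by
  rw [GaussianFourier.integral_rexp_neg_mul_sq_norm hb]
  norm_num [finrank_euclideanSpace]

theorem integrable_exp_neg_mul_norm_sq {b : ℝ} (hb : 0 < b) :
    Integrable fun y : ℝ² => exp (-b * ‖y‖ ^ 2) :=
  .of_integral_ne_zero (by rw [integral_exp_neg_mul_norm_sq hb]; positivity)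

theorem integral_exp_neg_mul_norm_sq_closedBall {b R : ℝ} (hb : 0 < b) (hR : 0 ≤ R) :
    ∫ y in closedBall (0 : ℝ²) R, exp (-b * ‖y‖ ^ 2) = π / b * (1 - exp (-b * R ^ 2)) := by
  have hantideriv : ∀ r ∈ uIcc 0 R,
      HasDerivAt (fun r => -exp (-b * r ^ 2) / (2 * b)) (r * exp (-b * r ^ 2)) r := by
    intro r _
    refine ((((hasDerivAt_pow 2 r).const_mul (-b)).exp.neg).div_const (2 * b)).congr_deriv ?_
    field_simp
    ring
  have hradial : ∫ r in Ioi (0 : ℝ), r • (Iic R).indicator (fun r => exp (-b * r ^ 2)) r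
      = (1 - exp (-b * R ^ 2)) / (2 * b) := by
    have hmul : ∀ r : ℝ, r • (Iic R).indicator (fun r => exp (-b * r ^ 2)) r
        = (Iic R).indicator (fun r => r * exp (-b * r ^ 2)) r :=
      fun r => (indicator_mul_right _ (fun r => r) _).symm
    simp_rw [hmul]
    rw [setIntegral_indicator measurableSet_Iic, Ioi_inter_Iic,
      ← intervalIntegral.integral_of_le hR, intervalIntegral.integral_eq_sub_of_hasDerivAt
        hantideriv (Continuous.intervalIntegrable (by fun_prop) _ _)]
    rw [zero_pow two_ne_zero, mul_zero, exp_zero]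
    ring
  have hball : ∀ y : ℝ², (closedBall 0 R).indicator (fun y => exp (-b * ‖y‖ ^ 2)) y
      = (Iic R).indicator (fun r => exp (-b * r ^ 2)) ‖y‖ := fun y => by
    simp [indicator]
  rw [← integral_indicator measurableSet_closedBall, funext hball, integral_fun_norm_addHaar]
  simp only [finrank_euclideanSpace_fin, Nat.add_one_sub_one, pow_one, hradial]
  simp only [measureReal_def, EuclideanSpace.volume_ball_fin_two, ENNReal.ofReal_one, one_pow,
    one_mul, ENNReal.toReal_ofReal pi_nonneg, smul_eq_mul, nsmul_eq_mul, Nat.cast_ofNat]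
  field_simp

theorem integrableOn_exp_neg_mul_add_div {z c : ℝ} (hz : 0 < z) (hc : 0 < c) :
    IntegrableOn (fun τ => exp (-(z / 2) * (τ / c + c / τ))) (Ioi 0) := by
  refine (exp_neg_integrableOn_Ioi 0 (by positivity : 0 < z / (2 * c))).mono' (by fun_prop) ?_
  filter_upwards [ae_restrict_mem measurableSet_Ioi] with τ (hτ : 0 < τ)
  rw [norm_of_nonneg (exp_pos _).le, exp_le_exp]
  have hdrop : 0 ≤ z / 2 * (c / τ) := by positivity
  calc -(z / 2) * (τ / c + c / τ) = -(z / (2 * c)) * τ - z / 2 * (c / τ) := by field_simp; ring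
    _ ≤ -(z / (2 * c)) * τ := by linarith

theorem integral_exp_neg_mul_add_div {z c : ℝ} (hz : 0 < z) (hc : 0 < c) :
    ∫ τ in Ioi 0, exp (-(z / 2) * (τ / c + c / τ)) = 2 * c * besselK1 z := by
  set F : ℝ → ℝ := fun τ => exp (-(z / 2) * (τ / c + c / τ))
  set g : ℝ → ℝ := fun t => exp (-z * cosh t)
  have himage : (fun t => c * exp t) '' univ = Ioi 0 := by
    rw [show (fun t => c * exp t) = (c * ·) ∘ exp from rfl, image_comp, image_univ, range_exp,
      image_const_mul_Ioi_zero hc]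
  have hderiv : ∀ t ∈ univ, HasDerivWithinAt (fun t => c * exp t) (c * exp t) univ t :=
    fun t _ => ((hasDerivAt_exp t).const_mul c).hasDerivWithinAt
  have hinj : InjOn (fun t => c * exp t) univ :=
    ((mul_right_injective₀ hc.ne').comp exp_injective).injOn
  have hsubst : ∀ t, |c * exp t| • F (c * exp t) = c * exp t * g t := fun t => by
    simp only [F, g]
    rw [abs_of_pos (by positivity), smul_eq_mul, cosh_eq, exp_neg]
    field_simp
  have hchange := integral_image_eq_integral_abs_deriv_smul MeasurableSet.univ hderiv hinj F
  have hint := (integrableOn_image_iff_integrableOn_abs_deriv_smul MeasurableSet.univ hderiv hinj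
    F).1 (himage ▸ integrableOn_exp_neg_mul_add_div hz hc)
  simp only [himage, hsubst, integrableOn_univ] at hchange hint
  have hint_neg : Integrable fun t => c * exp (-t) * g t := by
    simpa [g, cosh_neg] using hint.comp_neg
  -- `t ↦ -t` preserves the integral, so `eᵗ` may be replaced by its even part `cosh t`.
  have hsymm : ∫ t, c * exp (-t) * g t = ∫ t, c * exp t * g t := by
    rw [← integral_neg_eq_self]
    simp [g, cosh_neg]
  have hsum := integral_add hint hint_neg
  have habs := integral_comp_abs (f := fun s => 2 * c * (exp (-z * cosh s) * cosh s))
  calc ∫ τ in Ioi 0, F τ = ((∫ t, c * exp t * g t) + ∫ t, c * exp (-t) * g t) / 2 := by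
        rw [hchange, Measure.restrict_univ, hsymm]; ring
    _ = (∫ t, 2 * c * (exp (-z * cosh |t|) * cosh |t|)) / 2 := by
        rw [← hsum]
        congr 2 with t
        have hcosh : exp t + exp (-t) = 2 * cosh t := by rw [cosh_eq]; ring
        rw [cosh_abs]
        linear_combination c * g t * hcosh
    _ = 2 * c * besselK1 z := by
        rw [habs, integral_const_mul, besselK1]
        ring

theorem heatKernel2D_eq_mul_gaussian (D k : ℝ) (y : ℝ²) (τ : ℝ) :
    heatKernel2D D k y τ = exp (-k * τ) / (4 * π * D * τ) * exp (-(4 * D * τ)⁻¹ * ‖y‖ ^ 2) := by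
  rw [heatKernel2D, show -‖y‖ ^ 2 / (4 * D * τ) - k * τ = -(4 * D * τ)⁻¹ * ‖y‖ ^ 2 + -k * τ by ring,
    exp_add]
  ring

theorem heatKernel2D_nonneg {D τ : ℝ} (k : ℝ) (y : ℝ²) (hD : 0 ≤ D) (hτ : 0 ≤ τ) :
    0 ≤ heatKernel2D D k y τ := by
  unfold heatKernel2D
  positivity

theorem integrable_heatKernel2D {D τ : ℝ} (k : ℝ) (hD : 0 < D) (hτ : 0 < τ) :
    Integrable (heatKernel2D D k · τ) := by
  simp_rw [heatKernel2D_eq_mul_gaussian]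
  exact (integrable_exp_neg_mul_norm_sq (by positivity)).const_mul _

theorem integral_heatKernel2D {D τ : ℝ} (k : ℝ) (hD : 0 < D) (hτ : 0 < τ) :
    ∫ y, heatKernel2D D k y τ = exp (-k * τ) := by
  simp_rw [heatKernel2D_eq_mul_gaussian]
  rw [integral_const_mul, integral_exp_neg_mul_norm_sq (by positivity)]
  field_simp

theorem integral_closedBall_heatKernel2D {D τ R : ℝ} (k : ℝ) (hD : 0 < D) (hτ : 0 < τ)
    (hR : 0 ≤ R) :
    ∫ y in closedBall 0 R, heatKernel2D D k y τ
      = exp (-k * τ) * (1 - exp (-R ^ 2 / (4 * D * τ))) := by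
  simp_rw [heatKernel2D_eq_mul_gaussian]
  rw [integral_const_mul, integral_exp_neg_mul_norm_sq_closedBall (by positivity) hR]
  field_simp

theorem continuous_integral_closedBall_heatKernel2D {D k : ℝ} (hD : 0 < D) (hk : 0 < k) (R : ℝ) :
    Continuous fun b : ℝ² => ∫ τ in Ioi 0, ∫ y in closedBall b R, heatKernel2D D k y τ := by
  have hmeas : Measurable fun p : ℝ × ℝ² => heatKernel2D D k p.2 p.1 := by
    unfold heatKernel2D
    fun_prop
  refine continuous_of_dominated (bound := fun τ => exp (-k * τ)) (fun b => ?_) (fun b => ?_)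
    (exp_neg_integrableOn_Ioi 0 hk) ?_
  · exact (hmeas.stronglyMeasurable.integral_prod_right'
      (ν := volume.restrict (closedBall b R))).aestronglyMeasurable
  · filter_upwards [ae_restrict_mem measurableSet_Ioi] with τ hτ
    have hnonneg := fun y => heatKernel2D_nonneg k y hD.le (le_of_lt hτ)
    rw [norm_of_nonneg (setIntegral_nonneg measurableSet_closedBall fun y _ => hnonneg y),
      ← integral_heatKernel2D k hD hτ]
    exact setIntegral_le_integral (integrable_heatKernel2D k hD hτ) (.of_forall hnonneg)
  · filter_upwards [ae_restrict_mem measurableSet_Ioi] with τ hτ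
    exact continuous_setIntegral_closedBall (integrable_heatKernel2D k hD hτ) R

theorem integral_exp_neg_mul_mul_one_sub_exp {k D R : ℝ} (hk : 0 < k) (hD : 0 < D) (hR : 0 < R) :
    ∫ τ in Ioi 0, exp (-k * τ) * (1 - exp (-R ^ 2 / (4 * D * τ)))
      = (1 - √(k / D) * R * besselK1 (√(k / D) * R)) / k := by
  set z := √(k / D) * R
  have hz : 0 < z := by positivity
  have hc : 0 < z / (2 * k) := by positivity
  have hz2 : D * z ^ 2 = k * R ^ 2 := by
    rw [mul_pow, sq_sqrt (by positivity)]
    field_simp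
  clear_value z
  have hsplit : ∀ τ ∈ Ioi (0 : ℝ), exp (-k * τ) * (1 - exp (-R ^ 2 / (4 * D * τ)))
      = exp (-k * τ) - exp (-(z / 2) * (τ / (z / (2 * k)) + z / (2 * k) / τ)) := by
    intro τ hτ
    have hτ : τ ≠ 0 := (mem_Ioi.1 hτ).ne'
    rw [mul_one_sub, ← exp_add]
    congr 2
    field_simp
    linear_combination 4 * hz2
  rw [setIntegral_congr_fun measurableSet_Ioi hsplit,
    integral_sub (exp_neg_integrableOn_Ioi 0 hk) (integrableOn_exp_neg_mul_add_div hz hc),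
    integral_exp_mul_Ioi (neg_neg_of_pos hk), mul_zero, exp_zero,
    integral_exp_neg_mul_add_div hz hc]
  field_simp

theorem channel_response_tendsto_self_response_general (q k D R₀ : ℝ)
    (hk : 0 < k) (hD : 0 < D) (hR₀ : 0 < R₀) :
    Tendsto
      (fun b : EuclideanSpace ℝ (Fin 2) =>
        ∫ τ in Set.Ioi (0 : ℝ),
          ∫ y in {y : EuclideanSpace ℝ (Fin 2) | ‖y - b‖ ≤ R₀}, q * heatKernel2D D k y τ)
      (nhds 0)
      (nhds ((q / k) * (1 - Real.sqrt (k / D) * R₀ * besselK1 (Real.sqrt (k / D) * R₀)))) := by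
  have hlim := (continuous_integral_closedBall_heatKernel2D hD hk R₀).tendsto 0
  rw [setIntegral_congr_fun measurableSet_Ioi
      fun τ hτ => integral_closedBall_heatKernel2D k hD hτ hR₀.le,
    integral_exp_neg_mul_mul_one_sub_exp hk hD hR₀] at hlim
  have hball : ∀ b : ℝ², {y : ℝ² | ‖y - b‖ ≤ R₀} = closedBall b R₀ := fun b => by
    ext y
    simp [dist_eq_norm]
  simp_rw [hball, integral_const_mul]
  convert hlim.const_mul q using 2
  ring

/-- For `q > 0`, `k > 0`, `D > 0` and `R₀ > 0`, the asymptotic channel response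
`N̄(b) = ∫₀^∞ ∫_{|y − b| ≤ R₀} q·C(y, τ) dy dτ` at a circular receiver of radius `R₀` centered
at `b`, due to continuous emission at rate `q` from the origin, tends to
`(q/k)·(1 − √(k/D)·R₀·K₁(√(k/D)·R₀))` as `b → 0` in `ℝ²`. -/
theorem channel_response_tendsto_self_response (q k D R₀ : ℝ)
    (hq : 0 < q) (hk : 0 < k) (hD : 0 < D) (hR₀ : 0 < R₀) :
    Tendsto
      (fun b : EuclideanSpace ℝ (Fin 2) =>
        ∫ τ in Set.Ioi (0 : ℝ),
          ∫ y in {y : EuclideanSpace ℝ (Fin 2) | ‖y - b‖ ≤ R₀}, q * heatKernel2D D k y τ)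
      (nhds 0)
      (nhds ((q / k) * (1 - Real.sqrt (k / D) * R₀ * besselK1 (Real.sqrt (k / D) * R₀)))) :=
  channel_response_tendsto_self_response_general q k D R₀ hk hD hR₀
end
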